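/- If C = S/Ann_S(F) with F = T^{n−1}·F_B + G is a free extension of A = k[t]/(t^n) with fiber B = R/Ann_R(F_B) (i.e. ι makes C a free A-module and ker π = t·C), then (Ann_R(F_B))^2 ∘ G = 0. -/

import Mathlib

/-!
Let `p, q ∈ Ann(F_B)`. Since `π` sends the class of `p` to `0`, the hypothesis `ker π = t·C`
gives `p ≡ a·t` modulo `Ann(F)`. As `q` kills `T^{n-1}·F_B`, we get `q ∘ F = q ∘ G`, which does
not involve `T`, so `(pq) ∘ F = a ∘ (t ∘ (q ∘ G)) = 0`. On the other hand `(pq) ∘ F = (pq) ∘ G`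
for the same reason, hence `(pq) ∘ G = 0`.
-/

open MvPolynomial

noncomputable section

variable {k : Type*} [Field k]

open Classical in
/-- Contraction action of `g ∈ k[x_1,…]` on `F ∈ k[X_1,…]`: the monomial `x^a` sends
`X^b` to `X^(b-a)` if `a ≤ b` and to `0` otherwise, extended bilinearly. -/
def contract {σ : Type*} (g F : MvPolynomial σ k) : MvPolynomial σ k :=
  ∑ a ∈ g.support, ∑ b ∈ F.support,
    if a ≤ b then monomial (b - a) (g.coeff a * F.coeff b) else 0

/-- The annihilator `Ann(F) = {g : g ∘ F = 0}` (a set; it is in fact an ideal). -/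
def annSet {σ : Type*} (F : MvPolynomial σ k) : Set (MvPolynomial σ k) :=
  {g | contract g F = 0}

/-- The annihilator ideal of `F` (since `annSet F` is closed under the ideal operations,
the span coincides with it). -/
def annIdeal {σ : Type*} (F : MvPolynomial σ k) : Ideal (MvPolynomial σ k) :=
  Ideal.span (annSet F)

/-- `C` is a free module over `A` via the ring map `ι : A → C`. -/
def freeVia {A C : Type*} [CommRing A] [CommRing C] (ι : A →+* C) : Prop :=
  @Module.Free A C _ _ (Module.compHom C ι)

variable {σ : Type*}

open Classical in
lemma contract_eq_sum_of_subset (g F : MvPolynomial σ k) {s t : Finset (σ →₀ ℕ)}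
    (hs : g.support ⊆ s) (ht : F.support ⊆ t) :
    contract g F = ∑ a ∈ s, ∑ b ∈ t,
      if a ≤ b then monomial (b - a) (g.coeff a * F.coeff b) else 0 := by
  unfold contract
  rw [Finset.sum_subset hs fun a _ ha => by simp [notMem_support_iff.mp ha]]
  exact Finset.sum_congr rfl fun a _ =>
    Finset.sum_subset ht fun b _ hb => by simp [notMem_support_iff.mp hb]

lemma contract_add_left (p q F : MvPolynomial σ k) :
    contract (p + q) F = contract p F + contract q F := by
  classical
  rw [contract_eq_sum_of_subset (p + q) F support_add le_rfl,
    contract_eq_sum_of_subset p F Finset.subset_union_left le_rfl,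
    contract_eq_sum_of_subset q F Finset.subset_union_right le_rfl, ← Finset.sum_add_distrib]
  refine Finset.sum_congr rfl fun a _ => ?_
  rw [← Finset.sum_add_distrib]
  refine Finset.sum_congr rfl fun b _ => ?_
  split_ifs
  · rw [coeff_add, add_mul, map_add]
  · rw [add_zero]

lemma contract_add_right (p F G : MvPolynomial σ k) :
    contract p (F + G) = contract p F + contract p G := by
  classical
  rw [contract_eq_sum_of_subset p (F + G) le_rfl support_add,
    contract_eq_sum_of_subset p F le_rfl Finset.subset_union_left,
    contract_eq_sum_of_subset p G le_rfl Finset.subset_union_right, ← Finset.sum_add_distrib]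
  refine Finset.sum_congr rfl fun a _ => ?_
  rw [← Finset.sum_add_distrib]
  refine Finset.sum_congr rfl fun b _ => ?_
  split_ifs
  · rw [coeff_add, mul_add, map_add]
  · rw [add_zero]

@[simp] lemma zero_contract (F : MvPolynomial σ k) : contract 0 F = 0 := by
  simp [contract]

@[simp] lemma contract_zero (p : MvPolynomial σ k) : contract p 0 = 0 := by
  simp [contract]

lemma contract_sub_left (p q F : MvPolynomial σ k) :
    contract (p - q) F = contract p F - contract q F := by
  rw [eq_sub_iff_add_eq, ← contract_add_left, sub_add_cancel]

open Classical in
lemma contract_monomial_monomial (u v : σ →₀ ℕ) (a b : k) :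
    contract (monomial u a) (monomial v b)
      = if u ≤ v then monomial (v - u) (a * b) else 0 := by
  by_cases ha : a = 0
  · simp [ha]
  by_cases hb : b = 0
  · simp [hb]
  simp [contract, support_monomial, ha, hb, coeff_monomial]

lemma contract_mul (p q F : MvPolynomial σ k) :
    contract (p * q) F = contract p (contract q F) := by
  classical
  induction p using induction_on' with
  | add p₁ p₂ ih₁ ih₂ => rw [add_mul, contract_add_left, contract_add_left, ih₁, ih₂]
  | monomial u a =>
    induction q using induction_on' with
    | add q₁ q₂ ih₁ ih₂ =>
      rw [mul_add, contract_add_left, contract_add_left, contract_add_right, ih₁, ih₂]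
    | monomial v b =>
      induction F using induction_on' with
      | add F₁ F₂ ih₁ ih₂ =>
        rw [contract_add_right, contract_add_right, ih₁, ih₂, contract_add_right]
      | monomial w d =>
        rw [monomial_mul, contract_monomial_monomial, contract_monomial_monomial]
        by_cases hvw : v ≤ w
        · rw [if_pos hvw, contract_monomial_monomial]
          by_cases huv : u + v ≤ w
          · rw [if_pos huv, if_pos (le_tsub_of_add_le_right huv), add_comm u v,
              tsub_add_eq_tsub_tsub, mul_assoc]
          · rw [if_neg huv, if_neg fun h => huv (add_le_of_le_tsub_right_of_le hvw h)]
        · rw [if_neg hvw, contract_zero, if_neg fun h => hvw (le_add_self.trans h)]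

lemma contract_of_mem_annIdeal {F p : MvPolynomial σ k} (hp : p ∈ annIdeal F) :
    contract p F = 0 := by
  induction hp using Submodule.span_induction with
  | mem x hx => exact hx
  | zero => exact zero_contract F
  | add x y _ _ hx hy => rw [contract_add_left, hx, hy, add_zero]
  | smul r x _ hx => rw [smul_eq_mul, contract_mul, hx, contract_zero]

lemma mapDomain_some_apply_none (u : σ →₀ ℕ) : u.mapDomain Option.some none = 0 :=
  Finsupp.mapDomain_of_notMem_range _ _ (by simp)

lemma mapDomain_some_apply_some (u : σ →₀ ℕ) (i : σ) : u.mapDomain Option.some (some i) = u i :=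
  Finsupp.mapDomain_apply (Option.some_injective _) _ _

lemma mapDomain_some_le_single_none_add_iff (m : ℕ) (u v : σ →₀ ℕ) :
    u.mapDomain Option.some ≤ Finsupp.single none m + v.mapDomain Option.some ↔ u ≤ v := by
  simp only [Finsupp.le_def, Option.forall, mapDomain_some_apply_none, mapDomain_some_apply_some,
    Finsupp.add_apply, Finsupp.single_apply, reduceCtorEq, if_false, zero_add, zero_le, true_and]

lemma single_none_add_mapDomain_some_sub (m : ℕ) (u v : σ →₀ ℕ) :
    Finsupp.single none m + v.mapDomain Option.some - u.mapDomain Option.some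
      = Finsupp.single none m + (v - u).mapDomain Option.some := by
  ext (_ | i) <;>
    simp [mapDomain_some_apply_none, mapDomain_some_apply_some]

lemma contract_rename_some_X_none_pow_mul (m : ℕ) (p q : MvPolynomial σ k) :
    contract (rename Option.some p) (X none ^ m * rename Option.some q)
      = X none ^ m * rename Option.some (contract p q) := by
  classical
  induction p using induction_on' with
  | add p₁ p₂ ih₁ ih₂ =>
    rw [map_add, contract_add_left, contract_add_left, ih₁, ih₂, map_add, mul_add]
  | monomial u a =>
    induction q using induction_on' with
    | add q₁ q₂ ih₁ ih₂ =>
      rw [map_add, mul_add, contract_add_right, ih₁, ih₂, contract_add_right, map_add, mul_add]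
    | monomial v b =>
      rw [rename_monomial, rename_monomial, X_pow_eq_monomial, monomial_mul, one_mul,
        contract_monomial_monomial, contract_monomial_monomial]
      simp only [mapDomain_some_le_single_none_add_iff]
      split_ifs
      · rw [rename_monomial, monomial_mul, one_mul, single_none_add_mapDomain_some_sub]
      · rw [map_zero, mul_zero]

lemma contract_rename_some (p q : MvPolynomial σ k) :
    contract (rename Option.some p) (rename Option.some q) = rename Option.some (contract p q) := by
  simpa using contract_rename_some_X_none_pow_mul 0 p q

lemma contract_X_none_rename_some (q : MvPolynomial σ k) :
    contract (X none) (rename Option.some q) = 0 := by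
  classical
  induction q using induction_on' with
  | add q₁ q₂ ih₁ ih₂ => rw [map_add, contract_add_right, ih₁, ih₂, add_zero]
  | monomial v b =>
    rw [rename_monomial, X, contract_monomial_monomial, if_neg]
    intro h
    simpa [mapDomain_some_apply_none] using h none

lemma exists_rename_some_sub_mul_X_none_mem {I : Ideal (MvPolynomial (Option σ) k)}
    {J : Ideal (MvPolynomial σ k)}
    (π : (MvPolynomial (Option σ) k ⧸ I) →ₐ[k] (MvPolynomial σ k ⧸ J))
    (hπ : ∀ s, π (Ideal.Quotient.mk I s) = Ideal.Quotient.mk J (aeval (fun o => o.elim 0 X) s))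
    (hker : RingHom.ker π = Ideal.span {Ideal.Quotient.mk I (X none)})
    {p : MvPolynomial σ k} (hp : p ∈ J) :
    ∃ a, rename Option.some p - a * X none ∈ I := by
  have hpπ : Ideal.Quotient.mk I (rename Option.some p) ∈ RingHom.ker π := by
    rw [RingHom.mem_ker, hπ, aeval_rename]
    exact Ideal.Quotient.eq_zero_iff_mem.mpr (by simpa [Function.comp_def] using hp)
  obtain ⟨z, hz⟩ := Ideal.mem_span_singleton'.mp (hker ▸ hpπ)
  obtain ⟨a, rfl⟩ := Ideal.Quotient.mk_surjective z
  exact ⟨a, Ideal.Quotient.eq_zero_iff_mem.mp (by rw [map_sub, map_mul, hz, sub_self])⟩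

lemma contract_rename_some_eq_of_contract_eq_zero {m : ℕ} {FB G q : MvPolynomial σ k}
    (hq : contract q FB = 0) :
    contract (rename Option.some q) (X none ^ m * rename Option.some FB + rename Option.some G)
      = rename Option.some (contract q G) := by
  rw [contract_add_right, contract_rename_some_X_none_pow_mul, hq, map_zero, mul_zero, zero_add,
    contract_rename_some]

lemma contract_mul_eq_zero_of_ker_eq_span_X_none {m : ℕ} {FB G : MvPolynomial σ k}
    {F : MvPolynomial (Option σ) k}
    (hF : F = X none ^ m * rename Option.some FB + rename Option.some G)
    (π : (MvPolynomial (Option σ) k ⧸ annIdeal F) →ₐ[k] (MvPolynomial σ k ⧸ annIdeal FB))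
    (hπ : ∀ s, π (Ideal.Quotient.mk _ s) = Ideal.Quotient.mk _ (aeval (fun o => o.elim 0 X) s))
    (hker : RingHom.ker π = Ideal.span {Ideal.Quotient.mk (annIdeal F) (X none)})
    {p q : MvPolynomial σ k} (hp : p ∈ annIdeal FB) (hq : q ∈ annIdeal FB) :
    contract (p * q) G = 0 := by
  obtain ⟨a, ha⟩ := exists_rename_some_sub_mul_X_none_mem π hπ hker hp
  have hpF : contract (rename Option.some p) F = contract (a * X none) F := by
    rw [← sub_eq_zero, ← contract_sub_left, contract_of_mem_annIdeal ha]
  have hqF : contract (rename Option.some q) F = rename Option.some (contract q G) :=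
    hF ▸ contract_rename_some_eq_of_contract_eq_zero (contract_of_mem_annIdeal hq)
  have hpqF : contract (rename Option.some (p * q)) F = rename Option.some (contract (p * q) G) :=
    hF ▸ contract_rename_some_eq_of_contract_eq_zero
      (by rw [contract_mul, contract_of_mem_annIdeal hq, contract_zero])
  have : contract (rename Option.some (p * q)) F = 0 := calc
    _ = contract (rename Option.some q) (contract (rename Option.some p) F) := by
      rw [map_mul, mul_comm, contract_mul]
    _ = contract a (contract (X none) (contract (rename Option.some q) F)) := by
      rw [hpF, ← contract_mul, ← contract_mul, ← contract_mul]
      congr 1; ring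
    _ = 0 := by rw [hqF, contract_X_none_rename_some, contract_zero]
  exact rename_injective _ (Option.some_injective _) (by rw [← hpqF, this, map_zero])

theorem corollary_necessity_general (r n : ℕ)
    (FB : MvPolynomial (Fin r) k)
    (G : MvPolynomial (Fin r) k)
    (F : MvPolynomial (Option (Fin r)) k)
    (hF : F = X none ^ (n - 1) * rename Option.some FB + rename Option.some G)
    (π : (MvPolynomial (Option (Fin r)) k ⧸ annIdeal F) →ₐ[k]
      (MvPolynomial (Fin r) k ⧸ annIdeal FB))
    (hπ : ∀ s : MvPolynomial (Option (Fin r)) k,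
      π (Ideal.Quotient.mk _ s)
        = Ideal.Quotient.mk _ (aeval (fun o => o.elim 0 fun i => X i) s))
    -- C is a free extension of A with fiber B:
    (hker : RingHom.ker π = Ideal.span {Ideal.Quotient.mk (annIdeal F) (X none)}) :
    ∀ g ∈ (annIdeal FB) ^ 2, contract g G = 0 := by
  intro g hg
  rw [pow_two] at hg
  exact Submodule.mul_induction_on hg
    (fun p hp q hq => contract_mul_eq_zero_of_ker_eq_span_X_none hF π hπ hker hp hq)
    (fun x y hx hy => by rw [contract_add_left, hx, hy, add_zero])

/-- Corollary 3.7 (necessity, = [IMM, Theorem 2.25]).  Let `F_B ∈ Q` be nonzero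
homogeneous of degree `j_B`, `B = R/Ann(F_B)`, `G ∈ Q` homogeneous of degree `j_B + n - 1`,
and `F = T^{n-1}·F_B + G ∈ Q_S`.  If `C = S/Ann(F)` is a free extension of
`A = k[t]/(t^n)` with fiber `B` (`ι` makes `C` a free `A`-module and `ker π = t·C`),
then `(Ann(F_B))^2 ∘ G = 0`. -/
theorem corollary_necessity (r n : ℕ) (hn : 1 ≤ n) (jB : ℕ)
    (FB : MvPolynomial (Fin r) k) (hFB : FB ≠ 0) (hFBhom : FB.IsHomogeneous jB)
    (G : MvPolynomial (Fin r) k) (hGhom : G.IsHomogeneous (jB + n - 1))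
    (F : MvPolynomial (Option (Fin r)) k)
    (hF : F = X none ^ (n - 1) * rename Option.some FB + rename Option.some G)
    -- the algebra maps ι : A → C (induced by t ↦ t) and π : C → B (induced by x_i ↦ x_i, t ↦ 0)
    (ι : (Polynomial k ⧸ Ideal.span {(Polynomial.X : Polynomial k) ^ n}) →ₐ[k]
      (MvPolynomial (Option (Fin r)) k ⧸ annIdeal F))
    (hι : ι (Ideal.Quotient.mk _ Polynomial.X) = Ideal.Quotient.mk _ (X none))
    (π : (MvPolynomial (Option (Fin r)) k ⧸ annIdeal F) →ₐ[k]
      (MvPolynomial (Fin r) k ⧸ annIdeal FB))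
    (hπ : ∀ s : MvPolynomial (Option (Fin r)) k,
      π (Ideal.Quotient.mk _ s)
        = Ideal.Quotient.mk _ (aeval (fun o => o.elim 0 fun i => X i) s))
    -- C is a free extension of A with fiber B:
    (hfree : freeVia ι.toRingHom)
    (hsurj : Function.Surjective π)
    (hker : RingHom.ker π = Ideal.span {Ideal.Quotient.mk (annIdeal F) (X none)}) :
    ∀ g ∈ (annIdeal FB) ^ 2, contract g G = 0 :=
  corollary_necessity_general r n FB G F hF π hπ hker

end
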